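/- arXiv:2410.11956 — 7 statements merged into one kernel-verified Lean document; each statement's English description precedes it below -/
import Mathlib

section
/- Let T be a symmetric bilinear form and J, J̃ vectors on Minkowski space ℝ⁴. Then the following are equivalent: (i) for all vectors e₀, e₁, e₂, e₃ with η(e₀,e₀) = 1, η(eⱼ,eⱼ) = −1 for j = 1,2,3, η(e_μ,e_ν) = 0 for μ ≠ ν, and (e₀) 0 > 0, one has T(e₀,e₀) ≥ Real.sqrt (T(e₀,e₁)² + T(e₀,e₂)² + T(e₀,e₃)² + η(J,e₀)² + η(J̃,e₀)²); (ii) for every future-directed causal vector Z, both T(Z,Z) ≥ 0 and η(T♯Z, T♯Z) ≥ η(J,Z)² + η(J̃,Z)². -/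
noncomputable def eta (x y : Fin 4 → ℝ) : ℝ :=
  x 0 * y 0 - x 1 * y 1 - x 2 * y 2 - x 3 * y 3

private lemma fe01 : ((0:Fin 4) = 1) = False := by decide
private lemma fe02 : ((0:Fin 4) = 2) = False := by decide
private lemma fe03 : ((0:Fin 4) = 3) = False := by decide
private lemma fe10 : ((1:Fin 4) = 0) = False := by decide
private lemma fe12 : ((1:Fin 4) = 2) = False := by decide
private lemma fe13 : ((1:Fin 4) = 3) = False := by decide
private lemma fe20 : ((2:Fin 4) = 0) = False := by decide
private lemma fe21 : ((2:Fin 4) = 1) = False := by decide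
private lemma fe23 : ((2:Fin 4) = 3) = False := by decide
private lemma fe30 : ((3:Fin 4) = 0) = False := by decide
private lemma fe31 : ((3:Fin 4) = 1) = False := by decide
private lemma fe32 : ((3:Fin 4) = 2) = False := by decide

private lemma eta_comm (x y : Fin 4 → ℝ) : eta x y = eta y x := by simp only [eta]; ring

/-- orthogonal complement of a timelike vector is spacelike (or zero) -/
private lemma lemA (u r : Fin 4 → ℝ) (hu : 0 < eta u u) (hor : eta u r = 0) : eta r r ≤ 0 := by
  simp only [eta] at *
  by_contra hr
  push_neg at hr
  have hCS : (u 1 * r 1 + u 2 * r 2 + u 3 * r 3)^2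
      ≤ (u 1^2 + u 2^2 + u 3^2) * (r 1^2 + r 2^2 + r 3^2) := by
    nlinarith [sq_nonneg (u 1 * r 2 - u 2 * r 1), sq_nonneg (u 1 * r 3 - u 3 * r 1),
      sq_nonneg (u 2 * r 3 - u 3 * r 2)]
  have heq : u 0 * r 0 = u 1 * r 1 + u 2 * r 2 + u 3 * r 3 := by linarith
  have h1 : (u 0 * r 0)^2 ≤ (u 1^2 + u 2^2 + u 3^2) * (r 1^2 + r 2^2 + r 3^2) := by
    rw [heq]; exact hCS
  have hA : (0:ℝ) ≤ u 1^2 + u 2^2 + u 3^2 := by positivity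
  have hB : (0:ℝ) ≤ r 1^2 + r 2^2 + r 3^2 := by positivity
  have hu' : u 1^2 + u 2^2 + u 3^2 < u 0^2 := by nlinarith
  have hr' : r 1^2 + r 2^2 + r 3^2 < r 0^2 := by nlinarith
  have key := mul_pos (by linarith : (0:ℝ) < u 0^2 - (u 1^2 + u 2^2 + u 3^2))
    (by linarith : (0:ℝ) < r 0^2 - (r 1^2 + r 2^2 + r 3^2))
  nlinarith [h1, key, hA, hB, hu', hr']

noncomputable def dl (i : Fin 4) : Fin 4 → ℝ := fun j => if i = j then 1 else 0

private lemma eta_dl0 (x : Fin 4 → ℝ) : eta x (dl 0) = x 0 := by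
  simp [eta, dl, fe01, fe02, fe03]
private lemma eta_dl1 (x : Fin 4 → ℝ) : eta x (dl 1) = -x 1 := by
  simp [eta, dl, fe10, fe12, fe13]
private lemma eta_dl2 (x : Fin 4 → ℝ) : eta x (dl 2) = -x 2 := by
  simp [eta, dl, fe20, fe21, fe23]
private lemma eta_dl3 (x : Fin 4 → ℝ) : eta x (dl 3) = -x 3 := by
  simp [eta, dl, fe30, fe31, fe32]

private lemma quadArg (a b c : ℝ) (h : ∀ ε : ℝ, 0 < ε → 0 ≤ c + b*ε + a*ε^2) : 0 ≤ c := by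
  have hcont : Filter.Tendsto (fun ε : ℝ => c + b*ε + a*ε^2)
      (nhdsWithin 0 (Set.Ioi 0)) (nhds c) := by
    have h1 : Continuous fun ε : ℝ => c + b*ε + a*ε^2 := by continuity
    have h2 := h1.tendsto 0
    norm_num at h2
    exact h2.mono_left nhdsWithin_le_nhds
  exact ge_of_tendsto hcont (by filter_upwards [self_mem_nhdsWithin] using fun ε hε => h ε hε)

noncomputable def frame (u : Fin 4 → ℝ) : Fin 4 → Fin 4 → ℝ :=
  fun μ i => if μ = 0 then u i
    else if i = 0 then u μ else (if i = μ then 1 else 0) + u i * u μ / (1 + u 0)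

section
variable (u v : Fin 4 → ℝ) (hu : eta u u = 1) (ha : 0 < u 0)

lemma frame_zero : frame u 0 = u := by funext i; simp [frame]

include hu ha

private lemma frame_11 : eta (frame u 1) (frame u 1) = -1 := by
  have hk : (1:ℝ) + u 0 ≠ 0 := by positivity
  simp only [eta, frame, fe01, fe02, fe03, fe10, fe12, fe13, fe20, fe21, fe23, fe30, fe31,
    fe32, if_false, if_true, eq_self_iff_true] at *
  field_simp
  linear_combination (u 1)^2 * hu

private lemma frame_22 : eta (frame u 2) (frame u 2) = -1 := by
  have hk : (1:ℝ) + u 0 ≠ 0 := by positivity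
  simp only [eta, frame, fe01, fe02, fe03, fe10, fe12, fe13, fe20, fe21, fe23, fe30, fe31,
    fe32, if_false, if_true, eq_self_iff_true] at *
  field_simp
  linear_combination (u 2)^2 * hu

private lemma frame_33 : eta (frame u 3) (frame u 3) = -1 := by
  have hk : (1:ℝ) + u 0 ≠ 0 := by positivity
  simp only [eta, frame, fe01, fe02, fe03, fe10, fe12, fe13, fe20, fe21, fe23, fe30, fe31,
    fe32, if_false, if_true, eq_self_iff_true] at *
  field_simp
  linear_combination (u 3)^2 * hu

private lemma frame_01 : eta (frame u 0) (frame u 1) = 0 := by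
  have hk : (1:ℝ) + u 0 ≠ 0 := by positivity
  simp only [eta, frame, fe01, fe02, fe03, fe10, fe12, fe13, fe20, fe21, fe23, fe30, fe31,
    fe32, if_false, if_true, eq_self_iff_true] at *
  field_simp
  linear_combination (u 1) * hu

private lemma frame_02 : eta (frame u 0) (frame u 2) = 0 := by
  have hk : (1:ℝ) + u 0 ≠ 0 := by positivity
  simp only [eta, frame, fe01, fe02, fe03, fe10, fe12, fe13, fe20, fe21, fe23, fe30, fe31,
    fe32, if_false, if_true, eq_self_iff_true] at *
  field_simp
  linear_combination (u 2) * hu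

private lemma frame_03 : eta (frame u 0) (frame u 3) = 0 := by
  have hk : (1:ℝ) + u 0 ≠ 0 := by positivity
  simp only [eta, frame, fe01, fe02, fe03, fe10, fe12, fe13, fe20, fe21, fe23, fe30, fe31,
    fe32, if_false, if_true, eq_self_iff_true] at *
  field_simp
  linear_combination (u 3) * hu

private lemma frame_12 : eta (frame u 1) (frame u 2) = 0 := by
  have hk : (1:ℝ) + u 0 ≠ 0 := by positivity
  simp only [eta, frame, fe01, fe02, fe03, fe10, fe12, fe13, fe20, fe21, fe23, fe30, fe31,
    fe32, if_false, if_true, eq_self_iff_true] at *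
  field_simp
  linear_combination (u 1 * u 2) * hu

private lemma frame_13 : eta (frame u 1) (frame u 3) = 0 := by
  have hk : (1:ℝ) + u 0 ≠ 0 := by positivity
  simp only [eta, frame, fe01, fe02, fe03, fe10, fe12, fe13, fe20, fe21, fe23, fe30, fe31,
    fe32, if_false, if_true, eq_self_iff_true] at *
  field_simp
  linear_combination (u 1 * u 3) * hu

private lemma frame_23 : eta (frame u 2) (frame u 3) = 0 := by
  have hk : (1:ℝ) + u 0 ≠ 0 := by positivity
  simp only [eta, frame, fe01, fe02, fe03, fe10, fe12, fe13, fe20, fe21, fe23, fe30, fe31,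
    fe32, if_false, if_true, eq_self_iff_true] at *
  field_simp
  linear_combination (u 2 * u 3) * hu

private lemma complete1 : eta v (frame u 0)^2 - eta v (frame u 1)^2 - eta v (frame u 2)^2
    - eta v (frame u 3)^2 = eta v v := by
  have hk : (1:ℝ) + u 0 ≠ 0 := by positivity
  simp only [eta, frame, fe01, fe02, fe03, fe10, fe12, fe13, fe20, fe21, fe23, fe30, fe31,
    fe32, if_false, if_true, eq_self_iff_true] at *
  field_simp
  linear_combination ((1)*v 0^2 + (-2)*u 3*v 0*v 3 + (1)*u 3^2*v 3^2 + (-2)*u 2*v 0*v 2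
    + (2)*u 2*u 3*v 2*v 3 + (1)*u 2^2*v 2^2 + (-2)*u 1*v 0*v 1 + (2)*u 1*u 3*v 1*v 3
    + (2)*u 1*u 2*v 1*v 2 + (1)*u 1^2*v 1^2 + (2)*u 0*v 0^2 + (-2)*u 0*u 3*v 0*v 3
    + (-2)*u 0*u 2*v 0*v 2 + (-2)*u 0*u 1*v 0*v 1 + (1)*u 0^2*v 0^2) * hu

end

/-- Equivalence of the orthonormal-frame form of the local mass-charge inequality
with its invariant form in terms of future-directed causal vectors. -/
theorem localMassCharge_frame_iff_invariant
    (T : LinearMap.BilinForm ℝ (Fin 4 → ℝ)) (hT : ∀ x y, T x y = T y x)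
    (J Jt : Fin 4 → ℝ)
    (Tsharp : (Fin 4 → ℝ) → (Fin 4 → ℝ))
    (hTs : ∀ x u, eta (Tsharp x) u = T x u) :
    (∀ e : Fin 4 → (Fin 4 → ℝ),
        eta (e 0) (e 0) = 1 →
        (∀ j : Fin 4, j ≠ 0 → eta (e j) (e j) = -1) →
        (∀ μ ν : Fin 4, μ ≠ ν → eta (e μ) (e ν) = 0) →
        e 0 0 > 0 →
        T (e 0) (e 0) ≥
          Real.sqrt ((T (e 0) (e 1)) ^ 2 + (T (e 0) (e 2)) ^ 2 + (T (e 0) (e 3)) ^ 2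
            + (eta J (e 0)) ^ 2 + (eta Jt (e 0)) ^ 2))
    ↔
    (∀ Z : Fin 4 → ℝ, eta Z Z ≥ 0 → Z 0 ≥ 0 →
        T Z Z ≥ 0 ∧ eta (Tsharp Z) (Tsharp Z) ≥ (eta J Z) ^ 2 + (eta Jt Z) ^ 2) := by
  have etaSharp : ∀ x, eta (Tsharp x) (Tsharp x)
      = T x (dl 0)^2 - T x (dl 1)^2 - T x (dl 2)^2 - T x (dl 3)^2 := by
    intro x
    have h0 : (Tsharp x) 0 = T x (dl 0) := by rw [← hTs x (dl 0), eta_dl0]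
    have h1 : (Tsharp x) 1 = -T x (dl 1) := by
      have := hTs x (dl 1); rw [eta_dl1] at this; linarith
    have h2 : (Tsharp x) 2 = -T x (dl 2) := by
      have := hTs x (dl 2); rw [eta_dl2] at this; linarith
    have h3 : (Tsharp x) 3 = -T x (dl 3) := by
      have := hTs x (dl 3); rw [eta_dl3] at this; linarith
    simp only [eta, h0, h1, h2, h3]; ring
  constructor
  · -- frame form → invariant form
    intro h1
    -- step 1: unit timelike vectors
    have unit : ∀ u : Fin 4 → ℝ, eta u u = 1 → 0 < u 0 →
        0 ≤ T u u ∧ (eta J u)^2 + (eta Jt u)^2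
          ≤ T u (dl 0)^2 - T u (dl 1)^2 - T u (dl 2)^2 - T u (dl 3)^2 := by
      intro u hu ha
      have h00 : eta (frame u 0) (frame u 0) = 1 := by rw [frame_zero]; exact hu
      have hjj : ∀ j : Fin 4, j ≠ 0 → eta (frame u j) (frame u j) = -1 := by
        intro j hj
        fin_cases j
        · exact absurd rfl hj
        · exact frame_11 u hu ha
        · exact frame_22 u hu ha
        · exact frame_33 u hu ha
      have hor : ∀ μ ν : Fin 4, μ ≠ ν → eta (frame u μ) (frame u ν) = 0 := by
        intro μ ν hne
        fin_cases μ <;> fin_cases ν <;>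
          first
            | exact absurd rfl hne
            | exact frame_01 u hu ha
            | exact frame_02 u hu ha
            | exact frame_03 u hu ha
            | exact frame_12 u hu ha
            | exact frame_13 u hu ha
            | exact frame_23 u hu ha
            | (rw [eta_comm]; first
                | exact frame_01 u hu ha
                | exact frame_02 u hu ha
                | exact frame_03 u hu ha
                | exact frame_12 u hu ha
                | exact frame_13 u hu ha
                | exact frame_23 u hu ha)
      have hpos : frame u 0 0 > 0 := by rw [frame_zero]; exact ha
      have main := h1 (frame u) h00 hjj hor hpos
      rw [frame_zero] at main
      have hS : (0:ℝ) ≤ (T u (frame u 1))^2 + (T u (frame u 2))^2 + (T u (frame u 3))^2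
          + (eta J u)^2 + (eta Jt u)^2 := by positivity
      have hTu0 : 0 ≤ T u u := le_trans (Real.sqrt_nonneg _) main
      have hsq : (T u (frame u 1))^2 + (T u (frame u 2))^2 + (T u (frame u 3))^2
          + (eta J u)^2 + (eta Jt u)^2 ≤ (T u u)^2 := by
        nlinarith [Real.sq_sqrt hS, Real.sqrt_nonneg ((T u (frame u 1))^2 + (T u (frame u 2))^2
          + (T u (frame u 3))^2 + (eta J u)^2 + (eta Jt u)^2), main]
      refine ⟨hTu0, ?_⟩
      have hc := complete1 u (Tsharp u) hu ha
      rw [hTs u (frame u 0), hTs u (frame u 1), hTs u (frame u 2), hTs u (frame u 3),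
        frame_zero] at hc
      rw [← etaSharp u, ← hc]
      nlinarith [hsq]
    -- step 2: all timelike future vectors
    have tl : ∀ Z : Fin 4 → ℝ, 0 < eta Z Z → 0 < Z 0 →
        0 ≤ T Z Z ∧ (eta J Z)^2 + (eta Jt Z)^2
          ≤ T Z (dl 0)^2 - T Z (dl 1)^2 - T Z (dl 2)^2 - T Z (dl 3)^2 := by
      intro Z hZZ hZ0
      set l := Real.sqrt (eta Z Z) with hl
      have hlpos : 0 < l := Real.sqrt_pos.mpr hZZ
      have hll : l * l = eta Z Z := Real.mul_self_sqrt (le_of_lt hZZ)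
      set u : Fin 4 → ℝ := l⁻¹ • Z with hudef
      have hTuw : ∀ w, T u w = l⁻¹ * T Z w := by
        intro w; rw [hudef, map_smul]; simp
      have hetauu : eta u u = 1 := by
        have : eta u u = l⁻¹ * l⁻¹ * eta Z Z := by simp [hudef, eta]; ring
        rw [this, ← hll]; field_simp
      have hu0 : 0 < u 0 := by
        have : u 0 = l⁻¹ * Z 0 := by simp [hudef]
        rw [this]; positivity
      obtain ⟨hun1, hun2⟩ := unit u hetauu hu0
      constructor
      · have hTuu : T u u = l⁻¹ * (l⁻¹ * T Z Z) := by
          rw [hudef, map_smul, map_smul]; simp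
        rw [hTuu] at hun1
        have hm := mul_nonneg (le_of_lt (mul_pos hlpos hlpos)) hun1
        have hc : l * l * (l⁻¹ * (l⁻¹ * T Z Z)) = T Z Z := by
          field_simp
        linarith [hm, hc]
      · have e0 : T u (dl 0) = l⁻¹ * T Z (dl 0) := hTuw (dl 0)
        have e1 : T u (dl 1) = l⁻¹ * T Z (dl 1) := hTuw (dl 1)
        have e2 : T u (dl 2) = l⁻¹ * T Z (dl 2) := hTuw (dl 2)
        have e3 : T u (dl 3) = l⁻¹ * T Z (dl 3) := hTuw (dl 3)
        have eJ : eta J u = l⁻¹ * eta J Z := by simp [hudef, eta]; ring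
        have eJt : eta Jt u = l⁻¹ * eta Jt Z := by simp [hudef, eta]; ring
        rw [e0, e1, e2, e3, eJ, eJt] at hun2
        have hl0 : l ≠ 0 := ne_of_gt hlpos
        have hm := mul_le_mul_of_nonneg_left hun2 (le_of_lt (mul_pos hlpos hlpos))
        have eqL : l * l * ((l⁻¹ * eta J Z)^2 + (l⁻¹ * eta Jt Z)^2)
            = (eta J Z)^2 + (eta Jt Z)^2 := by
          field_simp
        have eqR : l * l * ((l⁻¹ * T Z (dl 0))^2 - (l⁻¹ * T Z (dl 1))^2
              - (l⁻¹ * T Z (dl 2))^2 - (l⁻¹ * T Z (dl 3))^2)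
            = T Z (dl 0)^2 - T Z (dl 1)^2 - T Z (dl 2)^2 - T Z (dl 3)^2 := by
          field_simp
        linarith [hm, eqL, eqR]
    -- step 3: limit to the boundary of the cone
    intro Z hZ hZ0
    have hεZ : ∀ ε : ℝ, 0 < ε → 0 < eta (Z + ε • dl 0) (Z + ε • dl 0) ∧ 0 < (Z + ε • dl 0) 0 := by
      intro ε hε
      constructor
      · have : eta (Z + ε • dl 0) (Z + ε • dl 0) = eta Z Z + 2*ε*(Z 0) + ε^2 := by
          simp [eta, dl, fe01, fe02, fe03]; ring
        rw [this]; nlinarith [hZ, hZ0, hε]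
      · have : (Z + ε • dl 0) 0 = Z 0 + ε := by simp [dl]
        rw [this]; linarith
    have expT : ∀ (ε : ℝ) (w : Fin 4 → ℝ), T (Z + ε • dl 0) w = T Z w + ε * T (dl 0) w := by
      intro ε w; rw [map_add, map_smul]; simp
    constructor
    · -- T Z Z ≥ 0
      have := quadArg (T (dl 0) (dl 0)) (2 * T Z (dl 0)) (T Z Z) ?_
      · linarith
      intro ε hε
      have h := (tl (Z + ε • dl 0) (hεZ ε hε).1 (hεZ ε hε).2).1
      have hTT : T (Z + ε • dl 0) (Z + ε • dl 0)
          = T Z Z + 2 * T Z (dl 0) * ε + T (dl 0) (dl 0) * ε^2 := by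
        rw [expT ε (Z + ε • dl 0)]
        have ha1 : T Z (Z + ε • dl 0) = T Z Z + ε * T Z (dl 0) := by
          rw [map_add, map_smul]; simp
        have ha2 : T (dl 0) (Z + ε • dl 0) = T (dl 0) Z + ε * T (dl 0) (dl 0) := by
          rw [map_add, map_smul]; simp
        rw [ha1, ha2, hT (dl 0) Z]; ring
      rw [hTT] at h; linarith
    · -- the sharp inequality
      rw [etaSharp Z, ge_iff_le, ← sub_nonneg]
      have key := quadArg
        (T (dl 0) (dl 0)^2 - T (dl 0) (dl 1)^2 - T (dl 0) (dl 2)^2 - T (dl 0) (dl 3)^2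
          - (eta J (dl 0))^2 - (eta Jt (dl 0))^2)
        (2 * (T Z (dl 0) * T (dl 0) (dl 0) - T Z (dl 1) * T (dl 0) (dl 1)
          - T Z (dl 2) * T (dl 0) (dl 2) - T Z (dl 3) * T (dl 0) (dl 3)
          - eta J Z * eta J (dl 0) - eta Jt Z * eta Jt (dl 0)))
        (T Z (dl 0)^2 - T Z (dl 1)^2 - T Z (dl 2)^2 - T Z (dl 3)^2
          - (eta J Z)^2 - (eta Jt Z)^2) ?_
      · linarith
      intro ε hε
      have h := (tl (Z + ε • dl 0) (hεZ ε hε).1 (hεZ ε hε).2).2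
      have eJ : eta J (Z + ε • dl 0) = eta J Z + ε * eta J (dl 0) := by
        simp [eta, dl, fe01, fe02, fe03, Pi.add_apply]; ring
      have eJt : eta Jt (Z + ε • dl 0) = eta Jt Z + ε * eta Jt (dl 0) := by
        simp [eta, dl, fe01, fe02, fe03, Pi.add_apply]; ring
      rw [eJ, eJt, expT ε (dl 0), expT ε (dl 1), expT ε (dl 2), expT ε (dl 3)] at h
      nlinarith [h]
  · -- invariant form → frame form
    intro h2 e h00 hjj hor hpos
    obtain ⟨hT0, hE⟩ := h2 (e 0) (by rw [h00]; norm_num) (le_of_lt hpos)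
    have hv : ∀ w, eta (Tsharp (e 0)) w = T (e 0) w := hTs (e 0)
    set v : Fin 4 → ℝ := Tsharp (e 0) with hvdef
    set c0 := T (e 0) (e 0) with hc0
    set c1 := T (e 0) (e 1) with hc1
    set c2 := T (e 0) (e 2) with hc2
    set c3 := T (e 0) (e 3) with hc3
    set r : Fin 4 → ℝ := fun i => v i - c0 * e 0 i + c1 * e 1 i + c2 * e 2 i + c3 * e 3 i
      with hrdef
    clear_value v c0 c1 c2 c3 r
    have hrw : ∀ w, eta r w = eta v w - c0 * eta (e 0) w + c1 * eta (e 1) w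
        + c2 * eta (e 2) w + c3 * eta (e 3) w := by
      intro w; simp only [hrdef, eta]; ring
    have hre0 : eta r (e 0) = 0 := by
      rw [hrw, hv, h00, hor 1 0 (by decide), hor 2 0 (by decide), hor 3 0 (by decide), ← hc0]
      ring
    have hre1 : eta r (e 1) = 0 := by
      rw [hrw, hv, hjj 1 (by decide), hor 0 1 (by decide), hor 2 1 (by decide),
        hor 3 1 (by decide), ← hc1]
      ring
    have hre2 : eta r (e 2) = 0 := by
      rw [hrw, hv, hjj 2 (by decide), hor 0 2 (by decide), hor 1 2 (by decide),
        hor 3 2 (by decide), ← hc2]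
      ring
    have hre3 : eta r (e 3) = 0 := by
      rw [hrw, hv, hjj 3 (by decide), hor 0 3 (by decide), hor 1 3 (by decide),
        hor 2 3 (by decide), ← hc3]
      ring
    have hvr : eta v r = eta v v - c0 * c0 + c1 * c1 + c2 * c2 + c3 * c3 := by
      rw [eta_comm v r, hrw v, eta_comm (e 0) v, eta_comm (e 1) v, eta_comm (e 2) v,
        eta_comm (e 3) v, hv (e 0), hv (e 1), hv (e 2), hv (e 3), ← hc0, ← hc1, ← hc2, ← hc3]
      try ring
    have hrr : eta r r = eta v v - c0 * c0 + c1 * c1 + c2 * c2 + c3 * c3 := by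
      rw [hrw r, eta_comm (e 0) r, eta_comm (e 1) r, eta_comm (e 2) r, eta_comm (e 3) r,
        hre0, hre1, hre2, hre3, hvr]
      ring
    have hA : eta r r ≤ 0 := lemA (e 0) r (by rw [h00]; norm_num)
      (by rw [eta_comm]; exact hre0)
    have hsum : c1^2 + c2^2 + c3^2 + (eta J (e 0))^2 + (eta Jt (e 0))^2 ≤ c0^2 := by
      linarith [hA, hrr, hE, pow_two c0, pow_two c1, pow_two c2, pow_two c3]
    calc Real.sqrt (c1^2 + c2^2 + c3^2 + (eta J (e 0))^2 + (eta Jt (e 0))^2)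
        ≤ Real.sqrt (c0^2) := Real.sqrt_le_sqrt hsum
      _ = c0 := Real.sqrt_sq hT0
end

section
/- Let T be a symmetric bilinear form and J, J̃ vectors on Minkowski space ℝ⁴ satisfying the local mass-charge inequality. Then for every future-directed causal vector Z, the vector T♯Z is future-directed causal. -/
def IsFutureCausal (x : Fin 4 → ℝ) : Prop :=
  0 ≤ eta x x ∧ 0 ≤ x 0

lemma eta_single_zero_right (x : Fin 4 → ℝ) : eta x (Pi.single 0 1) = x 0 := by
  simp [eta]

lemma isFutureCausal_single_zero : IsFutureCausal (Pi.single 0 1) := by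
  simp [IsFutureCausal, eta]

lemma IsFutureCausal.eta_nonneg {x y : Fin 4 → ℝ} (hx : IsFutureCausal x)
    (hy : IsFutureCausal y) : 0 ≤ eta x y := by
  obtain ⟨hxx, hx0⟩ := hx
  obtain ⟨hyy, hy0⟩ := hy
  unfold eta at *
  have spatial_cauchySchwarz : (x 1 * y 1 + x 2 * y 2 + x 3 * y 3) ^ 2 ≤
      (x 1 ^ 2 + x 2 ^ 2 + x 3 ^ 2) * (y 1 ^ 2 + y 2 ^ 2 + y 3 ^ 2) := by
    nlinarith [sq_nonneg (x 1 * y 2 - x 2 * y 1), sq_nonneg (x 1 * y 3 - x 3 * y 1),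
      sq_nonneg (x 2 * y 3 - x 3 * y 2)]
  have spatial_le_time : (x 1 * y 1 + x 2 * y 2 + x 3 * y 3) ^ 2 ≤ (x 0 * y 0) ^ 2 :=
    spatial_cauchySchwarz.trans <| by
      rw [mul_pow]
      exact mul_le_mul (by nlinarith) (by nlinarith) (by positivity) (sq_nonneg _)
  linarith [(abs_le_of_sq_le_sq' spatial_le_time (mul_nonneg hx0 hy0)).2]

/-- If (T, J, J̃) satisfies the local mass-charge inequality then T♯Z is
future-directed causal for every future-directed causal Z. -/
theorem Tsharp_futureCausal_of_localMassCharge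
    (T : LinearMap.BilinForm ℝ (Fin 4 → ℝ)) (hT : ∀ x y, T x y = T y x)
    (J Jt : Fin 4 → ℝ)
    (Tsharp : (Fin 4 → ℝ) → (Fin 4 → ℝ))
    (hTs : ∀ x u, eta (Tsharp x) u = T x u)
    (hLMC : ∀ Z : Fin 4 → ℝ, eta Z Z ≥ 0 → Z 0 ≥ 0 →
        T Z Z ≥ 0 ∧ eta (Tsharp Z) (Tsharp Z) ≥ (eta J Z) ^ 2 + (eta Jt Z) ^ 2) :
    ∀ Z : Fin 4 → ℝ, eta Z Z ≥ 0 → Z 0 ≥ 0 →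
        eta (Tsharp Z) (Tsharp Z) ≥ 0 ∧ (Tsharp Z) 0 ≥ 0 := by
  have causal (Z : Fin 4 → ℝ) (hZ : IsFutureCausal Z) : 0 ≤ eta (Tsharp Z) (Tsharp Z) :=
    (add_nonneg (sq_nonneg _) (sq_nonneg _)).trans (hLMC Z hZ.1 hZ.2).2
  have time_component (x : Fin 4 → ℝ) : Tsharp x 0 = T x (Pi.single 0 1) := by
    rw [← eta_single_zero_right (Tsharp x), hTs]
  have he₀ := isFutureCausal_single_zero
  have hTe₀ : IsFutureCausal (Tsharp (Pi.single 0 1)) :=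
    ⟨causal _ he₀, time_component _ ▸ (hLMC _ he₀.1 he₀.2).1⟩
  intro Z hZZ hZ0
  refine ⟨causal Z ⟨hZZ, hZ0⟩, ?_⟩
  calc Tsharp Z 0 = eta (Tsharp (Pi.single 0 1)) Z := by rw [time_component, hT, hTs]
    _ ≥ 0 := hTe₀.eta_nonneg ⟨hZZ, hZ0⟩
end

section
/- In Minkowski space ℝ⁴, if X is a null vector (η(X,X) = 0 and X ≠ 0) and W is a causal vector with η(W,X) = 0, then W = c • X for some real number c. -/
set_option maxHeartbeats 800000


/-- A causal vector orthogonal to a null vector is proportional to it. -/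
theorem causal_orthogonal_null_proportional
    (X W : Fin 4 → ℝ)
    (hXnull : eta X X = 0) (hXne : X ≠ 0)
    (hW : eta W W ≥ 0)
    (hWX : eta W X = 0) :
    ∃ c : ℝ, W = c • X := by
  unfold eta at hXnull hW hWX
  have hx0 : X 0 ≠ 0 := by
    intro h
    apply hXne
    have h1 : X 1 = 0 := by nlinarith [sq_nonneg (X 1), sq_nonneg (X 2), sq_nonneg (X 3)]
    have h2 : X 2 = 0 := by nlinarith [sq_nonneg (X 1), sq_nonneg (X 2), sq_nonneg (X 3)]
    have h3 : X 3 = 0 := by nlinarith [sq_nonneg (X 1), sq_nonneg (X 2), sq_nonneg (X 3)]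
    funext i
    fin_cases i <;> simp [h, h1, h2, h3]
  have h4 : (W 0 * X 0) * (W 0 * X 0 - W 1 * X 1 - W 2 * X 2 - W 3 * X 3) = 0 := by
    rw [hWX]; ring
  have h5 : (W 0 * W 0) * (X 0 * X 0 - X 1 * X 1 - X 2 * X 2 - X 3 * X 3) = 0 := by
    rw [hXnull]; ring
  have key : (W 1 * X 0 - W 0 * X 1)^2 + (W 2 * X 0 - W 0 * X 2)^2 +
      (W 3 * X 0 - W 0 * X 3)^2 = 0 := by
    nlinarith [mul_nonneg hW (mul_self_nonneg (X 0)), h4, h5,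
      sq_nonneg (W 1 * X 0 - W 0 * X 1),
      sq_nonneg (W 2 * X 0 - W 0 * X 2), sq_nonneg (W 3 * X 0 - W 0 * X 3)]
  have e1 : W 1 * X 0 - W 0 * X 1 = 0 := by
    nlinarith [sq_nonneg (W 1 * X 0 - W 0 * X 1), sq_nonneg (W 2 * X 0 - W 0 * X 2),
      sq_nonneg (W 3 * X 0 - W 0 * X 3)]
  have e2 : W 2 * X 0 - W 0 * X 2 = 0 := by
    nlinarith [sq_nonneg (W 1 * X 0 - W 0 * X 1), sq_nonneg (W 2 * X 0 - W 0 * X 2),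
      sq_nonneg (W 3 * X 0 - W 0 * X 3)]
  have e3 : W 3 * X 0 - W 0 * X 3 = 0 := by
    nlinarith [sq_nonneg (W 1 * X 0 - W 0 * X 1), sq_nonneg (W 2 * X 0 - W 0 * X 2),
      sq_nonneg (W 3 * X 0 - W 0 * X 3)]
  refine ⟨W 0 / X 0, ?_⟩
  funext i
  fin_cases i <;> simp [Pi.smul_apply, smul_eq_mul] <;> field_simp <;> linarith
end

section
/- In Minkowski space ℝ⁴, if x is a timelike vector (η(x,x) > 0), then for every vector y one has η(x,y)² ≥ η(x,x) * η(y,y) (the reversed Cauchy–Schwarz inequality). -/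
/-- Reversed Cauchy–Schwarz inequality for the Minkowski form. -/
theorem reversed_cauchy_schwarz
    (x : Fin 4 → ℝ) (hx : eta x x > 0) (y : Fin 4 → ℝ) :
    (eta x y) ^ 2 ≥ eta x x * eta y y := by
  unfold eta at *
  nlinarith [sq_nonneg ((x 1 ^ 2 + x 2 ^ 2 + x 3 ^ 2) * y 0
      - x 0 * (x 1 * y 1 + x 2 * y 2 + x 3 * y 3)),
    mul_nonneg hx.le (sq_nonneg (x 0 * y 1 - x 1 * y 0)),
    mul_nonneg hx.le (sq_nonneg (x 0 * y 2 - x 2 * y 0)),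
    mul_nonneg hx.le (sq_nonneg (x 0 * y 3 - x 3 * y 0)),
    sq_nonneg (x 1), sq_nonneg (x 2), sq_nonneg (x 3),
    mul_pos hx hx, sq_nonneg (x 0)]
end

section
/- Let λ, μ ∈ ℂ² (i.e. λ μ : Fin 2 → ℂ), and let H be the 2×2 complex matrix with entries H i j = λ i * conj (λ j) + μ i * conj (μ j). Then det H = ‖λ 0 * μ 1 − λ 1 * μ 0‖², i.e. the determinant of H equals the squared modulus of λ 0 * μ 1 − λ 1 * μ 0. (This is the spinorial identity X_a X^a = V V̄: the Minkowski norm of the vector built from the Dirac spinor (λ, μ) equals |V|² where V = λ 0 * μ 1 − λ 1 * μ 0.) -/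
open Complex

/-! The matrix is `A * Aᴴ` for the matrix `A` with columns `λ` and `μ`, so its determinant is
`det A * conj (det A) = |det A|²`, and `det A = λ₀μ₁ - λ₁μ₀`. -/

section

open scoped Matrix

variable {R : Type*} [CommRing R] [StarRing R]

theorem Matrix.of_add_mul_star_fin_two_eq (l m : Fin 2 → R) :
    Matrix.of (fun i j => l i * star (l j) + m i * star (m j))
      = (Matrix.of ![l, m])ᵀ * (Matrix.of ![l, m])ᵀᴴ := by
  ext i j
  simp [Matrix.mul_apply, Fin.sum_univ_two]

theorem Matrix.det_of_add_mul_star_fin_two (l m : Fin 2 → R) :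
    (Matrix.of fun i j => l i * star (l j) + m i * star (m j)).det
      = (l 0 * m 1 - l 1 * m 0) * star (l 0 * m 1 - l 1 * m 0) := by
  have hdet : (Matrix.of ![l, m]).det = l 0 * m 1 - l 1 * m 0 := by
    simp [Matrix.det_fin_two]
  rw [Matrix.of_add_mul_star_fin_two_eq, Matrix.det_mul, Matrix.det_conjTranspose,
    Matrix.det_transpose, hdet]

end

/-- The spinorial identity X_a X^a = V V̄: the determinant of the Hermitian
matrix built from the Dirac spinor (λ, μ) equals |λ₀μ₁ - λ₁μ₀|². -/
theorem det_spinor_matrix (l m : Fin 2 → ℂ) :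
    (Matrix.of fun i j : Fin 2 =>
        l i * (starRingEnd ℂ) (l j) + m i * (starRingEnd ℂ) (m j)).det
      = (‖l 0 * m 1 - l 1 * m 0‖ : ℂ) ^ 2 := by
  exact (Matrix.det_of_add_mul_star_fin_two l m).trans (mul_conj' _)
end

section
/- Let c be a nonzero complex number and let A be a 2×2 complex Hermitian matrix such that for all u, v ∈ ℂ²: re (u† A u) + re (v† A v) + 2 * re (c * (u 0 * v 1 − u 1 * v 0)) ≥ 0, where u† A u denotes the sesquilinear value ∑ᵢⱼ conj (u i) * A i j * u j. Then A is positive definite (re (u† A u) > 0 for all u ≠ 0) and the determinant of A (which is real since A is Hermitian) satisfies re (det A) ≥ ‖c‖². -/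
/-!
Replacing `u` by `t • u` for real `t` turns the hypothesis into a nonnegative real quadratic
`t² q(u) + 2t Re(c ω(u,v)) + q(v)`, so its discriminant gives `Re(c ω(u,v))² ≤ q(u) q(v)`.
For `u ≠ 0` some `v` makes the left side positive, hence `q(u) > 0`. For the determinant take
`u = e₀` and `v = c̄ w` with `w` the second column of `adj A`, so that `A w = det A • e₁`: with
`a = A₀₀ > 0` the bound reads `(|c|² a)² ≤ a · |c|² a det A`, i.e. `|c|² ≤ det A`.
-/

open Complex ComplexConjugate

section QuadraticBound

variable {E : Type*} [SMul ℝ E] {q : E → ℝ} {B : E → E → ℝ}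

theorem sq_le_mul_of_forall_nonneg_add_add (hq : ∀ (t : ℝ) u, q (t • u) = t ^ 2 * q u)
    (hB : ∀ (t : ℝ) u v, B (t • u) v = t * B u v) (h : ∀ u v, 0 ≤ q u + q v + 2 * B u v)
    (u v : E) : B u v ^ 2 ≤ q u * q v := by
  have hd := discrim_le_zero (a := q u) (b := 2 * B u v) (c := q v) fun t => by
    have := h (t • u) v
    rw [hq, hB] at this
    linarith
  rw [discrim] at hd
  linarith

theorem nonneg_of_forall_nonneg_add_add (hq : ∀ (t : ℝ) u, q (t • u) = t ^ 2 * q u)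
    (hB : ∀ (t : ℝ) u v, B (t • u) v = t * B u v) (h : ∀ u v, 0 ≤ q u + q v + 2 * B u v)
    (u : E) : 0 ≤ q u := by
  have := h ((0 : ℝ) • u) u
  rw [hq, hB] at this
  linarith

theorem pos_of_forall_nonneg_add_add (hq : ∀ (t : ℝ) u, q (t • u) = t ^ 2 * q u)
    (hB : ∀ (t : ℝ) u v, B (t • u) v = t * B u v) (h : ∀ u v, 0 ≤ q u + q v + 2 * B u v)
    {u v : E} (huv : B u v ≠ 0) : 0 < q u := by
  have hsq := sq_le_mul_of_forall_nonneg_add_add hq hB h u v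
  have hu := nonneg_of_forall_nonneg_add_add hq hB h u
  refine hu.lt_of_ne fun hu0 => huv ?_
  rw [← hu0, zero_mul] at hsq
  exact (pow_eq_zero_iff two_ne_zero).mp (le_antisymm hsq (sq_nonneg _))

end QuadraticBound

section QuadForm

variable {n : Type*} [Fintype n]

def quadForm (A : Matrix n n ℂ) (u : n → ℂ) : ℝ :=
  (∑ i, ∑ j, conj (u i) * A i j * u j).re

theorem quadForm_smul (A : Matrix n n ℂ) (z : ℂ) (u : n → ℂ) :
    quadForm A (z • u) = normSq z * quadForm A u := by
  have : ∑ i, ∑ j, conj ((z • u) i) * A i j * (z • u) j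
      = normSq z * ∑ i, ∑ j, conj (u i) * A i j * u j := by
    simp only [Finset.mul_sum, Pi.smul_apply, smul_eq_mul, map_mul, ← mul_conj]
    exact Finset.sum_congr rfl fun _ _ => Finset.sum_congr rfl fun _ _ => by ring
  rw [quadForm, this, re_ofReal_mul, quadForm]

theorem quadForm_real_smul (A : Matrix n n ℂ) (t : ℝ) (u : n → ℂ) :
    quadForm A (t • u) = t ^ 2 * quadForm A u := by
  have : t • u = (t : ℂ) • u := funext fun i => (real_smul (z := u i)).symm
  rw [this, quadForm_smul, normSq_ofReal, sq]

theorem quadForm_adjugate_col [DecidableEq n] (A : Matrix n n ℂ) (j : n) :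
    quadForm A (fun i => A.adjugate i j) = (conj (A.adjugate j j) * A.det).re := by
  -- `A * adj A = det A • 1`: `A` maps the `j`-th column of `adj A` to `det A • eⱼ`
  have hcol (i : n) : ∑ k, A i k * A.adjugate k j = if i = j then A.det else 0 := by
    simpa [Matrix.mul_apply, Matrix.one_apply] using congrFun (congrFun A.mul_adjugate i) j
  simp only [quadForm, mul_assoc, ← Finset.mul_sum, hcol, mul_ite, mul_zero,
    Finset.sum_ite_eq', Finset.mem_univ, if_true]

end QuadForm

section Wedge

variable {R : Type*} [CommRing R]

def wedge (u v : Fin 2 → R) : R := u 0 * v 1 - u 1 * v 0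

theorem wedge_smul_left (t : R) (u v : Fin 2 → R) :
    wedge (t • u) v = t * wedge u v := by
  simp only [wedge, Pi.smul_apply, smul_eq_mul]
  ring

theorem wedge_smul_right (t : R) (u v : Fin 2 → R) :
    wedge u (t • v) = t * wedge u v := by
  simp only [wedge, Pi.smul_apply, smul_eq_mul]
  ring

end Wedge

theorem wedge_conj_perp (u : Fin 2 → ℂ) :
    wedge u ![-conj (u 1), conj (u 0)] = (normSq (u 0) + normSq (u 1) : ℝ) := by
  simp only [wedge, Matrix.cons_val_zero, Matrix.cons_val_one, ofReal_add, ← mul_conj]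
  ring

theorem exists_re_mul_wedge_pos {c : ℂ} (hc : c ≠ 0) {u : Fin 2 → ℂ} (hu : u ≠ 0) :
    ∃ v, 0 < (c * wedge u v).re := by
  refine ⟨conj c • ![-conj (u 1), conj (u 0)], ?_⟩
  have hu' : 0 < normSq (u 0) + normSq (u 1) := by
    by_contra! h
    have h0 := normSq_nonneg (u 0)
    have h1 := normSq_nonneg (u 1)
    exact hu (funext (Fin.forall_fin_two.mpr
      ⟨normSq_eq_zero.mp (by linarith), normSq_eq_zero.mp (by linarith)⟩))
  rw [wedge_smul_right, wedge_conj_perp, ← mul_assoc, mul_conj, ← ofReal_mul, ofReal_re]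
  exact mul_pos (normSq_pos.mpr hc) hu'

theorem quadForm_adjugate_col_one (A : Matrix (Fin 2) (Fin 2) ℂ) (h : conj (A 0 0) = A 0 0) :
    quadForm A (fun i => A.adjugate i 1) = (A 0 0).re * A.det.re := by
  rw [quadForm_adjugate_col, Matrix.adjugate_fin_two]
  simp only [Matrix.of_apply, Matrix.cons_val', Matrix.cons_val_one, Matrix.empty_val',
    Matrix.cons_val_fin_one, h]
  rw [mul_re, conj_eq_iff_im.mp h, zero_mul, sub_zero]

/-- Algebraic core of the quasi-local mass-charge inequality ϖ² ≥ Q² + P²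
(Theorem 3.3): positivity of the quadratic form with off-diagonal charge term
forces A to be positive definite with re(det A) ≥ ‖c‖². -/
theorem massCharge_inequality_core
    (c : ℂ) (hc : c ≠ 0)
    (A : Matrix (Fin 2) (Fin 2) ℂ)
    (hA : ∀ i j : Fin 2, A i j = (starRingEnd ℂ) (A j i))
    (hpos : ∀ u v : Fin 2 → ℂ,
        0 ≤ (∑ i : Fin 2, ∑ j : Fin 2, (starRingEnd ℂ) (u i) * A i j * u j).re
          + (∑ i : Fin 2, ∑ j : Fin 2, (starRingEnd ℂ) (v i) * A i j * v j).re
          + 2 * (c * (u 0 * v 1 - u 1 * v 0)).re) :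
    (∀ u : Fin 2 → ℂ, u ≠ 0 →
        0 < (∑ i : Fin 2, ∑ j : Fin 2, (starRingEnd ℂ) (u i) * A i j * u j).re)
    ∧ ‖c‖ ^ 2 ≤ (A.det).re := by
  let B u v := (c * wedge u v).re
  have hq := quadForm_real_smul A
  have hB (t : ℝ) u v : B (t • u) v = t * B u v := by
    simp only [B, ← coe_smul, wedge_smul_left, mul_left_comm c, re_ofReal_mul]
  have hposdef (u : Fin 2 → ℂ) (hu : u ≠ 0) : 0 < quadForm A u :=
    let ⟨_, hv⟩ := exists_re_mul_wedge_pos hc hu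
    pos_of_forall_nonneg_add_add hq hB hpos hv.ne'
  refine ⟨hposdef, ?_⟩
  have he₀ : quadForm A ![1, 0] = (A 0 0).re := by simp [quadForm]
  have ha : 0 < (A 0 0).re := he₀ ▸ hposdef ![1, 0] (by simp)
  have hw : wedge ![1, 0] (fun i => A.adjugate i 1) = A 0 0 := by
    simp [wedge, Matrix.adjugate_fin_two]
  have key := sq_le_mul_of_forall_nonneg_add_add hq hB hpos ![1, 0]
    (conj c • fun i => A.adjugate i 1)
  simp only [B, quadForm_smul, quadForm_adjugate_col_one A (hA 0 0).symm, wedge_smul_right, hw,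
    he₀, ← mul_assoc, mul_conj, re_ofReal_mul, normSq_conj] at key
  have hN : 0 < normSq c := normSq_pos.mpr hc
  rw [Complex.sq_norm]
  refine le_of_mul_le_mul_left ?_ (mul_pos hN (pow_pos ha 2))
  linarith
end

section
/- Let n be a positive natural number and let A, B be n×n complex matrices with A Hermitian (Aᴴ = A), B skew-Hermitian (Bᴴ = −B), A² = 1, B² = −1, and A*B + B*A = 0. Then (A + B)² = 0, n is even, and the kernel of the linear map x ↦ (A + B).mulVec x has dimension n / 2 (equivalently, the rank of A + B equals n / 2). -/
open Complex Matrix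

/-- For Dirac-type matrices A, B, the matrix A + B is nilpotent of order 2,
n is even, and the kernel of A + B has dimension n / 2. -/
theorem chirality_projector_rank
    (n : ℕ) (hn : 0 < n)
    (A B : Matrix (Fin n) (Fin n) ℂ)
    (hA : Aᴴ = A) (hB : Bᴴ = -B)
    (hA2 : A * A = 1) (hB2 : B * B = -1)
    (hAB : A * B + B * A = 0) :
    (A + B) * (A + B) = 0 ∧ Even n ∧
      Module.finrank ℂ (LinearMap.ker (Matrix.mulVecLin (A + B))) = n / 2 := by
  set M := A + B with hM
  set N := A - B with hN
  have hM2 : M * M = 0 := by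
    have h : M * M = A * A + (A * B + B * A) + B * B := by rw [hM]; noncomm_ring
    rw [h, hA2, hAB, hB2]; simp
  have hMN : M * N + N * M = (4 : ℂ) • (1 : Matrix (Fin n) (Fin n) ℂ) := by
    have h : M * N + N * M = A * A + A * A - B * B - B * B := by
      rw [hM, hN]; noncomm_ring
    rw [h, hA2, hB2]
    ext i j
    simp [Matrix.one_apply]
    ring_nf
    split <;> norm_num
  set f := Matrix.mulVecLin M with hf
  have hcomp : ∀ y, f (f y) = 0 := by
    intro y
    simp only [hf, Matrix.mulVecLin_apply, Matrix.mulVec_mulVec, hM2, Matrix.zero_mulVec]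
  have hker : LinearMap.ker f = LinearMap.range f := by
    apply le_antisymm
    · intro x hx
      have hx' : M.mulVec x = 0 := hx
      refine ⟨(4 : ℂ)⁻¹ • N.mulVec x, ?_⟩
      have h4 : M.mulVec (N.mulVec x) + N.mulVec (M.mulVec x) = (4 : ℂ) • x := by
        rw [Matrix.mulVec_mulVec, Matrix.mulVec_mulVec, ← Matrix.add_mulVec, hMN,
          Matrix.smul_mulVec, Matrix.one_mulVec]
      rw [hx', Matrix.mulVec_zero, add_zero] at h4
      simp only [hf, Matrix.mulVecLin_apply, Matrix.mulVec_smul, h4]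
      rw [smul_smul]
      norm_num
    · rintro x ⟨y, rfl⟩
      exact hcomp y
  have hrn := LinearMap.finrank_range_add_finrank_ker f
  rw [← hker, Module.finrank_pi] at hrn
  simp only [Fintype.card_fin] at hrn
  refine ⟨hM2, ?_, ?_⟩
  · exact ⟨Module.finrank ℂ (LinearMap.ker f), by omega⟩
  · omega
end
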